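/- Let Q be an Ω-algebra, X a set. For each subalgebra τ of Q^X (a Q-topology), let Φ(τ) = { p ∈ Q^X | p is Q-continuous from (X,τ) to the Q-Sierpinski space (Q,⟨{id_Q}⟩) }. Then Φ(τ) = τ; in particular Φ is the identity on the set of Q-topologies on X. -/

import Mathlib

universe u v w x

/-- Closure of a set of `Q`-valued functions on `X` under the pointwise
Ω-algebra operations `ops`. -/
def Closed {Q : Type u} {I : Type v} {n : I → Type w} (ops : ∀ i, (n i → Q) → Q)
    {X : Type x} (B : Set (X → Q)) : Prop :=
  ∀ i (p : n i → X → Q), (∀ j, p j ∈ B) → (fun x => ops i (fun j => p j x)) ∈ B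

/-- A `Q`-topology on `X`: a nonempty subset of `Q^X` closed under the
pointwise operations, i.e. a subalgebra of the power algebra. -/
def IsQTop {Q : Type u} {I : Type v} {n : I → Type w} (ops : ∀ i, (n i → Q) → Q)
    {X : Type x} (τ : Set (X → Q)) : Prop :=
  τ.Nonempty ∧ Closed ops τ

/-- The subalgebra of `Q^X` generated by `S`: the intersection of all
subalgebras containing `S`. -/
def gen {Q : Type u} {I : Type v} {n : I → Type w} (ops : ∀ i, (n i → Q) → Q)
    {X : Type x} (S : Set (X → Q)) : Set (X → Q) :=
  ⋂₀ {B | S ⊆ B ∧ IsQTop ops B}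

/-- `Q`-continuity of `f : (X,τ) → (Y,η)` : preimages `α ∘ f` of members of `η`
belong to `τ`. -/
def QCont {Q : Type u} {I : Type v} {n : I → Type w} (ops : ∀ i, (n i → Q) → Q)
    {X : Type x} {Y : Type x} (τ : Set (X → Q)) (η : Set (Y → Q)) (f : X → Y) : Prop :=
  ∀ α ∈ η, (fun x => α (f x)) ∈ τ

/-- The `Q`-Sierpinski topology on `S = Q`: the subalgebra of `Q^Q` generated
by the identity map. -/
def sierp {Q : Type u} {I : Type v} {n : I → Type w} (ops : ∀ i, (n i → Q) → Q) :
    Set (Q → Q) :=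
  gen ops ({id} : Set (Q → Q))

section

variable {Q : Type u} {I : Type v} {n : I → Type w} (ops : ∀ i, (n i → Q) → Q)

theorem subset_gen {X : Type x} (S : Set (X → Q)) : S ⊆ gen ops S :=
  fun _ hα _ hB => hB.1 hα

theorem gen_subset {X : Type x} {S B : Set (X → Q)} (hSB : S ⊆ B) (hB : IsQTop ops B) :
    gen ops S ⊆ B :=
  Set.sInter_subset_of_mem ⟨hSB, hB⟩

theorem Closed.preimage_comp {X Y : Type x} {τ : Set (X → Q)} (hτ : Closed ops τ) (f : X → Y) :
    Closed ops {α : Y → Q | (fun x => α (f x)) ∈ τ} :=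
  fun i p hp => hτ i (fun j x => p j (f x)) hp

theorem qCont_gen_iff {X Y : Type x} {τ : Set (X → Q)} {S : Set (Y → Q)} (hτ : Closed ops τ)
    (hS : S.Nonempty) (f : X → Y) :
    QCont ops τ (gen ops S) f ↔ ∀ α ∈ S, (fun x => α (f x)) ∈ τ := by
  refine ⟨fun hf α hα => hf α (subset_gen ops S hα), fun h => ?_⟩
  obtain ⟨α₀, hα₀⟩ := hS
  exact gen_subset ops h ⟨⟨α₀, h α₀ hα₀⟩, hτ.preimage_comp ops f⟩

end

theorem stmt_13 {Q : Type u} {I : Type v} {n : I → Type w} (ops : ∀ i, (n i → Q) → Q)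
    {X : Type u} (τ : Set (X → Q)) (hτ : IsQTop ops τ) :
    {p : X → Q | QCont ops τ (sierp ops) p} = τ := by
  ext p
  simpa [sierp] using qCont_gen_iff ops hτ.2 (Set.singleton_nonempty id) p
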